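/- Let F and G be nonconstant meromorphic functions sharing the value 1 with weight t, where 0 ≤ t < ∞. Then N̄(r,1;F) + N̄(r,1;G) − N_E^{1)}(r,1;F) + (t − 1/2)·N̄_*(r,1;F,G) ≤ (1/2)·(N(r,1;F) + N(r,1;G)). -/

import Mathlib

open Complex MeasureTheory Filter Classical

noncomputable section

namespace Nev

/-- Multiplicity of `z` as a zero of `f` (0 if `f` is not meromorphic at `z`,
or if `f` does not vanish at `z`, or if `f` vanishes identically near `z`). -/
noncomputable def zm (f : ℂ → ℂ) (z : ℂ) : ℕ :=
  if h : MeromorphicAt f z then (max 0 ((meromorphicOrderAt f z).untopD 0)).toNat else 0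

/-- Multiplicity of `z` as a pole of `f`. -/
noncomputable def pm (f : ℂ → ℂ) (z : ℂ) : ℕ :=
  if h : MeromorphicAt f z then (max 0 (-((meromorphicOrderAt f z).untopD 0))).toNat else 0

/-- Integrated counting function associated to a multiplicity weight `w`:
`N(r) = Σ_{0<|a|≤r} w(a)·log(r/|a|) + w(0)·log r`. -/
noncomputable def Ncnt (w : ℂ → ℕ) (r : ℝ) : ℝ :=
  (∑' z : ℂ, if ‖z‖ ≤ r ∧ z ≠ 0 then (w z : ℝ) * Real.log (r / ‖z‖) else 0)
    + (w 0 : ℝ) * Real.log r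

/-- `log⁺`. -/
noncomputable def logPlus (x : ℝ) : ℝ := Real.log (max 1 x)

/-- Nevanlinna proximity function `m(r,f)`. -/
noncomputable def prox (f : ℂ → ℂ) (r : ℝ) : ℝ :=
  (2 * Real.pi)⁻¹ * ∫ θ in (0:ℝ)..(2 * Real.pi),
    logPlus (‖f ((r : ℂ) * Complex.exp (θ * Complex.I))‖)

/-- Nevanlinna characteristic `T(r,f) = m(r,f) + N(r,f)`. -/
noncomputable def T (f : ℂ → ℂ) (r : ℝ) : ℝ := prox f r + Ncnt (pm f) r

/-- Zero-multiplicity of `f - a`. -/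
noncomputable def am (f : ℂ → ℂ) (a : ℂ) : ℂ → ℕ := fun z => zm (fun w => f w - a) z

/-- Truncation to multiplicity 1 (reduced counting). -/
def red (w : ℂ → ℕ) : ℂ → ℕ := fun z => min (w z) 1

/-- `s` is a small error term for `f` outside the exceptional set `E`:
`E` has finite linear measure and `s(r) = o(T(r,f))` as `r → ∞` outside `E`. -/
def IsSmall (s : ℝ → ℝ) (f : ℂ → ℂ) (E : Set ℝ) : Prop :=
  volume E < ⊤ ∧ ∀ ε > 0, ∀ᶠ r in atTop, r ∉ E → |s r| ≤ ε * T f r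

/-- `f` is nonconstant. -/
def Noncst (f : ℂ → ℂ) : Prop := ∃ z w, f z ≠ f w

end Nev


open Nev

/-!
Every counting function in the statement is a finite sum of a multiplicity weight against the
nonnegative kernel `log (r / ‖z‖)` (with `log r` at the origin), since only finitely many 1-points
of `F` and `G` lie in the closed disc of radius `r`. The inequality therefore reduces to a
pointwise inequality between multiplicities, where sharing with weight `t` means that distinct
multiplicities at a common 1-point both exceed `t`.
-/

namespace Nev

theorem zm_support_finite_of_isCompact {f : ℂ → ℂ} {K : Set ℂ} (hK : IsCompact K)
    (hf : MeromorphicOn f K) : (K ∩ Function.support (zm f)).Finite := by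
  refine ((MeromorphicOn.divisor f K).finiteSupport hK).subset ?_
  rintro z ⟨hzK, hz⟩
  rw [Function.mem_support, MeromorphicOn.divisor_apply hf hzK]
  intro h0
  change WithTop.untopD 0 _ = 0 at h0
  simp [zm, hf z hzK, h0] at hz

noncomputable def countKernel (r : ℝ) (z : ℂ) : ℝ :=
  if z = 0 then Real.log r else if ‖z‖ ≤ r then Real.log (r / ‖z‖) else 0

theorem countKernel_nonneg {r : ℝ} (hr : 1 ≤ r) (z : ℂ) : 0 ≤ countKernel r z := by
  unfold countKernel
  split_ifs with h0 hz
  · exact Real.log_nonneg hr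
  · exact Real.log_nonneg ((one_le_div (norm_pos_iff.mpr h0)).mpr hz)
  · exact le_rfl

theorem Ncnt_eq_sum_countKernel {w : ℂ → ℕ} {r : ℝ} {s : Finset ℂ}
    (hs : ∀ z, ‖z‖ ≤ r → w z ≠ 0 → z ∈ s) :
    Ncnt w r = ∑ z ∈ insert 0 s, (w z : ℝ) * countKernel r z := by
  rw [← Finset.add_sum_erase _ _ (Finset.mem_insert_self 0 s), Ncnt, add_comm,
    tsum_eq_sum (s := (insert 0 s).erase 0)]
  · simp only [countKernel, if_true]
    congr 1
    refine Finset.sum_congr rfl fun z hz => ?_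
    obtain ⟨hz0, -⟩ := Finset.mem_erase.mp hz
    by_cases hzr : ‖z‖ ≤ r <;> simp [hz0, hzr]
  · intro z hz
    rw [Finset.mem_erase, Finset.mem_insert, not_and_or, not_or] at hz
    split_ifs with hzr
    · obtain hz0 | ⟨-, hzs⟩ := hz
      · exact absurd hzr.2 hz0
      · simp [Decidable.of_not_not (mt (hs z hzr.1) hzs)]
    · rfl

theorem weighted_sharing_multiplicity_le {m n t : ℕ} (h : min m (t + 1) = min n (t + 1)) :
    ((min m 1 : ℕ) : ℝ) + ((min n 1 : ℕ) : ℝ) - ((if m = 1 ∧ n = 1 then 1 else 0 : ℕ) : ℝ)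
        + ((t : ℝ) - 1 / 2) * ((if 1 ≤ m ∧ 1 ≤ n ∧ m ≠ n then 1 else 0 : ℕ) : ℝ)
      ≤ ((m : ℝ) + n) / 2 := by
  rcases Nat.eq_zero_or_pos m with rfl | hm
  · obtain rfl : n = 0 := by omega
    norm_num
  rw [show min m 1 = 1 by omega, show min n 1 = 1 by omega]
  by_cases hmn : m = n
  · subst hmn
    rw [if_neg (show ¬(1 ≤ m ∧ 1 ≤ m ∧ m ≠ m) by omega)]
    by_cases hm1 : m = 1
    · simp [hm1]
    · have : (2 : ℝ) ≤ m := by exact_mod_cast (by omega : 2 ≤ m)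
      rw [if_neg (show ¬(m = 1 ∧ m = 1) by omega)]
      push_cast
      linarith
  · rw [if_neg (show ¬(m = 1 ∧ n = 1) by omega), if_pos (show 1 ≤ m ∧ 1 ≤ n ∧ m ≠ n by omega)]
    have : (2 * t + 3 : ℝ) ≤ m + n := by exact_mod_cast (by omega : 2 * t + 3 ≤ m + n)
    push_cast
    linarith

end Nev

theorem weighted_sharing_counting_inequality_general (F G : ℂ → ℂ) (t : ℕ)
    (hF : MeromorphicOn F (Set.univ : Set ℂ)) (hG : MeromorphicOn G (Set.univ : Set ℂ))
    (hshare : ∀ z : ℂ, min (am F 1 z) (t + 1) = min (am G 1 z) (t + 1)) :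
    ∀ r : ℝ, 1 ≤ r →
      Ncnt (red (am F 1)) r + Ncnt (red (am G 1)) r
          - Ncnt (fun z => if am F 1 z = 1 ∧ am G 1 z = 1 then 1 else 0) r
          + ((t : ℝ) - 1 / 2) *
            Ncnt (fun z => if 1 ≤ am F 1 z ∧ 1 ≤ am G 1 z ∧ am F 1 z ≠ am G 1 z
              then 1 else 0) r
        ≤ (Ncnt (am F 1) r + Ncnt (am G 1) r) / 2 := by
  intro r hr
  have hfin (H : ℂ → ℂ) (hH : MeromorphicOn H Set.univ) :
      (Metric.closedBall 0 r ∩ Function.support (am H 1)).Finite :=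
    zm_support_finite_of_isCompact (isCompact_closedBall 0 r)
      fun z _ => (hH z trivial).sub (MeromorphicAt.const 1 z)
  set s := ((hfin F hF).union (hfin G hG)).toFinset
  have hNcnt (w : ℂ → ℕ) (hw : ∀ z, w z ≠ 0 → am F 1 z ≠ 0 ∨ am G 1 z ≠ 0) :
      Ncnt w r = ∑ z ∈ insert 0 s, (w z : ℝ) * countKernel r z :=
    Ncnt_eq_sum_countKernel fun z hzr hwz => by
      rcases hw z hwz with h | h <;> simp [s, hzr, h]
  rw [hNcnt _ fun z => by unfold red; omega, hNcnt _ fun z => by unfold red; omega,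
    hNcnt _ fun z => by split_ifs <;> omega, hNcnt _ fun z => by split_ifs <;> omega,
    hNcnt _ fun z => by omega, hNcnt _ fun z => by omega]
  rw [Finset.mul_sum, ← Finset.sum_add_distrib, ← Finset.sum_sub_distrib,
    ← Finset.sum_add_distrib, ← Finset.sum_add_distrib, Finset.sum_div]
  refine Finset.sum_le_sum fun z _ => ?_
  dsimp only [red]
  linear_combination mul_le_mul_of_nonneg_right (weighted_sharing_multiplicity_le (hshare z))
    (countKernel_nonneg hr z)

/-- Lemma 3.2: if nonconstant meromorphic `F, G` share the value 1 with weight `t`, then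
`N̄(r,1;F) + N̄(r,1;G) − N_E^{1)}(r,1;F) + (t − 1/2)·N̄_*(r,1;F,G)
≤ (1/2)(N(r,1;F) + N(r,1;G))`. -/
theorem weighted_sharing_counting_inequality (F G : ℂ → ℂ) (t : ℕ)
    (hF : MeromorphicOn F (Set.univ : Set ℂ)) (hG : MeromorphicOn G (Set.univ : Set ℂ))
    (hFnc : Noncst F) (hGnc : Noncst G)
    (hshare : ∀ z : ℂ, min (am F 1 z) (t + 1) = min (am G 1 z) (t + 1)) :
    ∀ r : ℝ, 1 ≤ r →
      Ncnt (red (am F 1)) r + Ncnt (red (am G 1)) r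
          - Ncnt (fun z => if am F 1 z = 1 ∧ am G 1 z = 1 then 1 else 0) r
          + ((t : ℝ) - 1 / 2) *
            Ncnt (fun z => if 1 ≤ am F 1 z ∧ 1 ≤ am G 1 z ∧ am F 1 z ≠ am G 1 z
              then 1 else 0) r
        ≤ (Ncnt (am F 1) r + Ncnt (am G 1) r) / 2 :=
  weighted_sharing_counting_inequality_general F G t hF hG hshare
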